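/- arXiv:2503.05457 — 11 statements merged into one kernel-verified Lean document; each statement's English description precedes it below -/
import Mathlib

section
/- Let A, B, C be finite types. If f : (A → ℝ) → (B → ℝ) respects a span (s_R, R, t_R) from A to B and g : (B → ℝ) → (C → ℝ) respects a span (s_S, S, t_S) from B to C, then the composite g ∘ f : (A → ℝ) → (C → ℝ) respects the composite span from A to C whose apex is the pullback R ×_B S = {(r, σ) : t_R(r) = s_S(σ)} with legs (r, σ) ↦ s_R(r) and (r, σ) ↦ t_S(σ). -/
/-- A function `φ : (A → ℝ) → (B → ℝ)` respects the span `(s, R, t)` if for every `b : B`,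
whenever `x, x'` agree at every `a ∈ s(t⁻¹({b}))`, then `φ x b = φ x' b`. -/
def RespectsSpan {R A B : Type} (s : R → A) (t : R → B)
    (φ : (A → ℝ) → (B → ℝ)) : Prop :=
  ∀ (b : B) (x x' : A → ℝ),
    (∀ r : R, t r = b → x (s r) = x' (s r)) → φ x b = φ x' b

theorem stmt1 {A B C R S : Type} [Fintype A] [Fintype B] [Fintype C]
    [Fintype R] [Fintype S]
    (sR : R → A) (tR : R → B) (sS : S → B) (tS : S → C)
    (f : (A → ℝ) → (B → ℝ)) (g : (B → ℝ) → (C → ℝ))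
    (hf : RespectsSpan sR tR f) (hg : RespectsSpan sS tS g) :
    RespectsSpan (fun p : {p : R × S // tR p.1 = sS p.2} => sR p.1.1)
      (fun p : {p : R × S // tR p.1 = sS p.2} => tS p.1.2) (g ∘ f) := by
  intro c x x' h
  apply hg c
  intro σ hσ
  apply hf (sS σ)
  intro r hr
  exact h ⟨(r, σ), hr⟩ hσ
end

section
/- Let G = (V, E) be a finite directed acyclic graph and let φ : (V → ℝ) → (V → ℝ) be such that for every vertex v, whenever x, x' : V → ℝ agree at every strict ancestor of v (every vertex that is the source of some path with target v), then φ(x)(v) = φ(x')(v). Then φ has a unique fixed point. -/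
/-!
The strict-ancestor relation of a finite acyclic graph is transitive and irreflexive, hence
well-founded. Since `φ x v` only sees `x` on the ancestors of `v`, a fixed point is built by
well-founded recursion along this relation, and any two fixed points agree by well-founded
induction.
-/

/-- The one-step edge relation of a graph with edge type `E`, vertex type `V`,
and source/target maps `src, tgt : E → V`: there is an edge from `u` to `v`. -/
def EdgeRel {V E : Type} (src tgt : E → V) : V → V → Prop :=
  fun u v => ∃ e : E, src e = u ∧ tgt e = v

namespace WellFounded

variable {α β : Type*} {r : α → α → Prop}

theorem eq_of_isFixedPt_of_forall_eq_on_lt (hr : WellFounded r) {φ : (α → β) → α → β}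
    (hφ : ∀ a x x', (∀ b, r b a → x b = x' b) → φ x a = φ x' a) {x y : α → β}
    (hx : φ x = x) (hy : φ y = y) : x = y := by
  funext a
  induction a using hr.induction with
  | _ a ih =>
    calc x a = φ x a := by rw [hx]
      _ = φ y a := hφ a x y ih
      _ = y a := by rw [hy]

theorem exists_isFixedPt_of_forall_eq_on_lt [Nonempty β] (hr : WellFounded r)
    {φ : (α → β) → α → β} (hφ : ∀ a x x', (∀ b, r b a → x b = x' b) → φ x a = φ x' a) :
    ∃ x, φ x = x := by
  classical
  -- The values off the predecessors of `a` are irrelevant, so any default will do.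
  let x : α → β := hr.fix fun a ih =>
    φ (fun b => if h : r b a then ih b h else Classical.arbitrary β) a
  refine ⟨x, funext fun a => ?_⟩
  rw [show x a = _ from hr.fix_eq _ a]
  exact hφ a x _ fun b hb => by simp only [dif_pos hb, x]

theorem existsUnique_isFixedPt_of_forall_eq_on_lt [Nonempty β] (hr : WellFounded r)
    {φ : (α → β) → α → β} (hφ : ∀ a x x', (∀ b, r b a → x b = x' b) → φ x a = φ x' a) :
    ∃! x, φ x = x :=
  let ⟨x, hx⟩ := hr.exists_isFixedPt_of_forall_eq_on_lt hφ
  ⟨x, hx, fun _ hy => hr.eq_of_isFixedPt_of_forall_eq_on_lt hφ hy hx⟩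

end WellFounded

theorem wellFounded_transGen_of_finite {α : Type*} [Finite α] {r : α → α → Prop}
    (hr : ∀ a, ¬ Relation.TransGen r a a) : WellFounded (Relation.TransGen r) :=
  haveI : IsTrans α (Relation.TransGen r) := ⟨fun _ _ _ => Relation.TransGen.trans⟩
  haveI : Std.Irrefl (Relation.TransGen r) := ⟨hr⟩
  Finite.wellFounded_of_trans_of_irrefl _

theorem stmt3_general {V E : Type} [Fintype V]
    (src tgt : E → V)
    (hacyc : ∀ v : V, ¬ Relation.TransGen (EdgeRel src tgt) v v)
    (φ : (V → ℝ) → (V → ℝ))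
    (hφ : ∀ (v : V) (x x' : V → ℝ),
      (∀ u : V, Relation.TransGen (EdgeRel src tgt) u v → x u = x' u) →
      φ x v = φ x' v) :
    ∃! x : V → ℝ, φ x = x :=
  (wellFounded_transGen_of_finite hacyc).existsUnique_isFixedPt_of_forall_eq_on_lt hφ

/-- `u` is a strict ancestor of `v` iff there is a (nonempty) path from `u` to `v`,
i.e. `Relation.TransGen (EdgeRel src tgt) u v`.  A graph is acyclic iff no path has equal
source and target. -/
theorem stmt3 {V E : Type} [Fintype V] [Fintype E]
    (src tgt : E → V)
    (hacyc : ∀ v : V, ¬ Relation.TransGen (EdgeRel src tgt) v v)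
    (φ : (V → ℝ) → (V → ℝ))
    (hφ : ∀ (v : V) (x x' : V → ℝ),
      (∀ u : V, Relation.TransGen (EdgeRel src tgt) u v → x u = x' u) →
      φ x v = φ x' v) :
    ∃! x : V → ℝ, φ x = x :=
  stmt3_general src tgt hacyc φ hφ
end

section
/- Let G = (V, E) be a finite directed acyclic graph and let φ : (V → ℝ) → (V → ℝ) be such that for every vertex v, whenever x, x' : V → ℝ agree at every parent of v (every src(e) for an edge e with tgt(e) = v), then φ(x)(v) = φ(x')(v). Then for every a : V → ℝ the map x ↦ φ(x) + a has a unique fixed point f(a), and the resulting map f : (V → ℝ) → (V → ℝ) satisfies: for every vertex v, whenever a, a' : V → ℝ agree at v and at every strict ancestor of v, then f(a)(v) = f(a')(v). -/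
/-- If `φ(x)(v)` only depends on the values of `x` at the parents of `v` and the graph is
acyclic, then for every `a` the map `x ↦ φ x + a` has a unique fixed point, and the
map `f` sending `a` to that fixed point satisfies: `f a v` only depends on the values of
`a` at `v` and at the strict ancestors of `v`. -/
theorem stmt4 {V E : Type} [Fintype V] [Fintype E]
    (src tgt : E → V)
    (hacyc : ∀ v : V, ¬ Relation.TransGen (EdgeRel src tgt) v v)
    (φ : (V → ℝ) → (V → ℝ))
    (hφ : ∀ (v : V) (x x' : V → ℝ),
      (∀ e : E, tgt e = v → x (src e) = x' (src e)) → φ x v = φ x' v) :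
    (∀ a : V → ℝ, ∃! x : V → ℝ, φ x + a = x) ∧
    (∀ f : (V → ℝ) → (V → ℝ), (∀ a : V → ℝ, φ (f a) + a = f a) →
      ∀ (v : V) (a a' : V → ℝ), a v = a' v →
        (∀ u : V, Relation.TransGen (EdgeRel src tgt) u v → a u = a' u) →
        f a v = f a' v) := by
  classical
  set T := Relation.TransGen (EdgeRel src tgt) with hT
  haveI : IsTrans V T := ⟨fun _ _ _ => Relation.TransGen.trans⟩
  haveI : IsIrrefl V T := ⟨hacyc⟩
  have wf : WellFounded T := Finite.wellFounded_of_trans_of_irrefl T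
  -- key comparison lemma
  have key : ∀ (a a' x x' : V → ℝ), φ x + a = x → φ x' + a' = x' →
      ∀ v, (∀ u, (T u v ∨ u = v) → a u = a' u) → x v = x' v := by
    intro a a' x x' hx hx' v
    induction v using wf.induction with
    | _ v ih =>
      intro hagree
      have h1 : x v = φ x v + a v := by
        conv_lhs => rw [← hx]
        rfl
      have h2 : x' v = φ x' v + a' v := by
        conv_lhs => rw [← hx']
        rfl
      have hφeq : φ x v = φ x' v := by
        refine hφ v x x' fun e he => ?_
        have hTe : T (src e) v := Relation.TransGen.single ⟨e, rfl, he⟩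
        refine ih (src e) hTe fun u hu => hagree u (Or.inl ?_)
        rcases hu with h | h
        · exact h.trans hTe
        · exact h ▸ hTe
      rw [h1, h2, hφeq, hagree v (Or.inr rfl)]
  constructor
  · intro a
    -- construct fixed point by well-founded recursion
    set x : V → ℝ := wf.fix
      (fun v ih => φ (fun u => if h : T u v then ih u h else 0) v + a v) with hxdef
    have hxeq : ∀ v, x v = φ (fun u => if h : T u v then x u else 0) v + a v := by
      intro v
      rw [hxdef, WellFounded.fix_eq]
    have hfix : φ x + a = x := by
      funext v
      have : φ x v = φ (fun u => if h : T u v then x u else 0) v := by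
        refine hφ v _ _ fun e he => ?_
        have hTe : T (src e) v := Relation.TransGen.single ⟨e, rfl, he⟩
        simp [hTe]
      show φ x v + a v = x v
      rw [this, ← hxeq]
    refine ⟨x, hfix, fun y hy => ?_⟩
    funext v
    exact key a a y x hy hfix v (fun u _ => rfl)
  · intro f hf v a a' hv hanc
    refine key a a' (f a) (f a') (hf a) (hf a') v fun u hu => ?_
    rcases hu with h | h
    · exact hanc u h
    · exact h ▸ hv
end

section
/- Let G = (V, E) be a finite directed acyclic graph with |V| = N and let φ : (V → ℝ) → (V → ℝ) be such that for every vertex v, whenever x, x' : V → ℝ agree at every parent of v (every src(e) for an edge e with tgt(e) = v), then φ(x)(v) = φ(x')(v). Given a : V → ℝ, define the sequence x₀ = a and x_{i+1} = φ(x_i) + a. Then x_N is a fixed point of the map x ↦ φ(x) + a. -/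
/-- For an acyclic graph with `N = |V|` vertices and `φ` which at each vertex only depends
on the values at its parents, the sequence `x₀ = a`, `x_{i+1} = φ(x_i) + a` reaches a fixed
point of `x ↦ φ x + a` at step `N`. -/
theorem stmt5 {V E : Type} [Fintype V] [Fintype E]
    (src tgt : E → V)
    (hacyc : ∀ v : V, ¬ Relation.TransGen (EdgeRel src tgt) v v)
    (φ : (V → ℝ) → (V → ℝ))
    (hφ : ∀ (v : V) (x x' : V → ℝ),
      (∀ e : E, tgt e = v → x (src e) = x' (src e)) → φ x v = φ x' v)
    (a : V → ℝ) :
    (fun x => φ x + a) ((fun x => φ x + a)^[Fintype.card V] a) =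
      (fun x => φ x + a)^[Fintype.card V] a := by
  classical
  set R := EdgeRel src tgt with hR
  set F : (V → ℝ) → (V → ℝ) := fun x => φ x + a with hF
  -- rank of a vertex: number of transitive predecessors
  set r : V → ℕ := fun v =>
    (Finset.univ.filter (fun u => Relation.TransGen R u v)).card with hr
  have hrlt : ∀ u v, R u v → r u < r v := by
    intro u v huv
    apply Finset.card_lt_card
    constructor
    · intro w hw
      simp only [Finset.mem_filter, Finset.mem_univ, true_and] at hw ⊢
      exact hw.tail huv
    · intro hsub
      have hu : u ∈ Finset.univ.filter (fun w => Relation.TransGen R w v) := by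
        simp only [Finset.mem_filter, Finset.mem_univ, true_and]
        exact Relation.TransGen.single huv
      have := hsub hu
      simp only [Finset.mem_filter, Finset.mem_univ, true_and] at this
      exact hacyc u this
  have hrcard : ∀ v, r v < Fintype.card V := by
    intro v
    have : (Finset.univ.filter (fun u => Relation.TransGen R u v)) ⊂ Finset.univ := by
      refine Finset.ssubset_univ_iff.2 ?_
      intro h
      have : v ∈ Finset.univ.filter (fun u => Relation.TransGen R u v) := by
        rw [h]; exact Finset.mem_univ v
      simp only [Finset.mem_filter, Finset.mem_univ, true_and] at this
      exact hacyc v this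
    simpa [Finset.card_univ] using Finset.card_lt_card this
  -- stabilization at each vertex past its rank
  have key : ∀ k, ∀ v, r v = k → ∀ n, r v + 1 ≤ n → F^[n] a v = F^[n+1] a v := by
    intro k
    induction k using Nat.strong_induction_on with
    | _ k ih =>
      intro v hv n hn
      obtain ⟨m, rfl⟩ : ∃ m, n = m + 1 := ⟨n - 1, by omega⟩
      have h1 : F^[m+1] a v = φ (F^[m] a) v + a v := by
        rw [Function.iterate_succ_apply']; rfl
      have h2 : F^[m+2] a v = φ (F^[m+1] a) v + a v := by
        rw [Function.iterate_succ_apply']; rfl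
      rw [h1, h2]
      have : φ (F^[m] a) v = φ (F^[m+1] a) v := by
        apply hφ
        intro e he
        set u := src e with hu
        have hRuv : R u v := ⟨e, rfl, he⟩
        have hru : r u < k := hv ▸ hrlt u v hRuv
        exact ih (r u) hru u rfl m (by omega)
      rw [this]
  funext v
  have := key (r v) v rfl (Fintype.card V) (hrcard v)
  rw [Function.iterate_succ_apply'] at this
  exact this.symm
end

section
/- Let Xin, Xout, Yin, Yout be finite types, and suppose given: a finite type W_f with maps s_f : W_f → Xout and t_f : W_f → Xin (trace wires of f); a finite type Win_f with maps s : Win_f → Yin and t : Win_f → Xin (input wires of f); a finite type Wout_f with maps s : Wout_f → Xout and t : Wout_f → Yout (output wires of f); a finite type W_g with maps s_g : W_g → Yout and t_g : W_g → Yin (trace wires of g); and relations d_X ⊆ Xin × Xout and d_Y ⊆ Yin × Yout. Let G_f be the graph on vertex type Xin ⊕ Xout with an edge from s_f(w) ∈ Xout to t_f(w) ∈ Xin for each w ∈ W_f and an edge from i ∈ Xin to o ∈ Xout for each (i, o) ∈ d_X, and let G_g be the analogous graph on Yin ⊕ Yout built from W_g and d_Y. Assume (1) G_f is acyclic, (2)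 G_g is acyclic, and (3) for every win ∈ Win_f and wout ∈ Wout_f, if there is a path in G_f from t(win) to s(wout), then (s(win), t(wout)) ∈ d_Y. Then the graph on Xin ⊕ Xout whose edges are those of G_f together with one edge from s(wout) ∈ Xout to t(win) ∈ Xin for every triple (wout, w, win) ∈ Wout_f × W_g × Win_f with t(wout) = s_g(w) and t_g(w) = s(win), is acyclic. -/
/-- The edge relation of the graph on vertices `Xin ⊕ Xout` whose edges are: for each
trace wire `w : W`, an edge from `s w : Xout` to `t w : Xin`; and for each pair
`(i, o)` in the dependency relation `d`, an edge from `i : Xin` to `o : Xout`. -/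
def WireRel {Xin Xout W : Type} (s : W → Xout) (t : W → Xin)
    (d : Xin → Xout → Prop) : (Xin ⊕ Xout) → (Xin ⊕ Xout) → Prop :=
  fun u v =>
    (∃ w : W, u = Sum.inr (s w) ∧ v = Sum.inl (t w)) ∨
    (∃ i o, d i o ∧ u = Sum.inl i ∧ v = Sum.inr o)

/-- Composition of acyclic morphisms of dependent directed wiring diagrams is acyclic:
if `G_f` (built from trace wires of `f` and `d_X`) and `G_g` (built from trace wires of
`g` and `d_Y`) are acyclic, and every path of `G_f` from the target of an input wire of
`f` to the source of an output wire of `f` is recorded in `d_Y`, then the graph obtained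
from `G_f` by adding an edge from `s(wout)` to `t(win)` for every composable triple
`(wout, w, win) ∈ Wout_f × W_g × Win_f` is acyclic. -/
theorem stmt7 {Xin Xout Yin Yout Wf Winf Woutf Wg : Type}
    [Fintype Xin] [Fintype Xout] [Fintype Yin] [Fintype Yout]
    [Fintype Wf] [Fintype Winf] [Fintype Woutf] [Fintype Wg]
    (sf : Wf → Xout) (tf : Wf → Xin)
    (sIn : Winf → Yin) (tIn : Winf → Xin)
    (sOut : Woutf → Xout) (tOut : Woutf → Yout)
    (sg : Wg → Yout) (tg : Wg → Yin)
    (dX : Xin → Xout → Prop) (dY : Yin → Yout → Prop)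
    (hf : ∀ v : Xin ⊕ Xout, ¬ Relation.TransGen (WireRel sf tf dX) v v)
    (hg : ∀ v : Yin ⊕ Yout, ¬ Relation.TransGen (WireRel sg tg dY) v v)
    (hdY : ∀ (win : Winf) (wout : Woutf),
      Relation.TransGen (WireRel sf tf dX) (Sum.inl (tIn win)) (Sum.inr (sOut wout)) →
      dY (sIn win) (tOut wout)) :
    ∀ v : Xin ⊕ Xout,
      ¬ Relation.TransGen
        (fun u v => WireRel sf tf dX u v ∨
          ∃ (wout : Woutf) (w : Wg) (win : Winf),
            tOut wout = sg w ∧ tg w = sIn win ∧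
            u = Sum.inr (sOut wout) ∧ v = Sum.inl (tIn win))
        v v := by
  intro v hcyc
  set Rold := WireRel sf tf dX with hRold
  set Sg := WireRel sg tg dY with hSg
  have claim : ∀ u v : Xin ⊕ Xout,
      Relation.TransGen
        (fun u v => WireRel sf tf dX u v ∨
          ∃ (wout : Woutf) (w : Wg) (win : Winf),
            tOut wout = sg w ∧ tg w = sIn win ∧
            u = Sum.inr (sOut wout) ∧ v = Sum.inl (tIn win)) u v →
      Relation.TransGen Rold u v ∨
      ∃ (wout : Woutf) (win : Winf),
        Relation.ReflTransGen Rold u (Sum.inr (sOut wout)) ∧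
        Relation.ReflTransGen Rold (Sum.inl (tIn win)) v ∧
        Relation.ReflTransGen Sg (Sum.inr (tOut wout)) (Sum.inl (sIn win)) := by
    intro u v h
    induction h with
    | single hstep =>
      rcases hstep with hold | ⟨wout, w, win, h1, h2, rfl, rfl⟩
      · exact Or.inl (Relation.TransGen.single hold)
      · refine Or.inr ⟨wout, win, Relation.ReflTransGen.refl, Relation.ReflTransGen.refl, ?_⟩
        rw [h1]
        exact Relation.ReflTransGen.single (Or.inl ⟨w, rfl, by rw [h2]⟩)
    | tail hpath hstep ih =>
      rcases hstep with hold | ⟨wout', w', win', h1, h2, rfl, rfl⟩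
      · rcases ih with hL | ⟨wout, win, p1, p2, p3⟩
        · exact Or.inl (hL.tail hold)
        · exact Or.inr ⟨wout, win, p1, p2.tail hold, p3⟩
      · rcases ih with hL | ⟨wout, win, p1, p2, p3⟩
        · refine Or.inr ⟨wout', win', hL.to_reflTransGen, Relation.ReflTransGen.refl, ?_⟩
          rw [h1]
          exact Relation.ReflTransGen.single (Or.inl ⟨w', rfl, by rw [h2]⟩)
        · have htg : Relation.TransGen Rold (Sum.inl (tIn win)) (Sum.inr (sOut wout')) := by
            rcases Relation.reflTransGen_iff_eq_or_transGen.mp p2 with heq | ht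
            · exact absurd heq (by simp)
            · exact ht
          have hd := hdY win wout' htg
          refine Or.inr ⟨wout, win', p1, Relation.ReflTransGen.refl, ?_⟩
          refine p3.trans ?_
          refine Relation.ReflTransGen.head (Or.inr ⟨sIn win, tOut wout', hd, rfl, rfl⟩) ?_
          rw [h1]
          exact Relation.ReflTransGen.single (Or.inl ⟨w', rfl, by rw [h2]⟩)
  rcases claim v v hcyc with hL | ⟨wout, win, p1, p2, p3⟩
  · exact hf v hL
  · have htg : Relation.TransGen Rold (Sum.inl (tIn win)) (Sum.inr (sOut wout)) := by
      rcases Relation.reflTransGen_iff_eq_or_transGen.mp (p2.trans p1) with heq | ht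
      · exact absurd heq (by simp)
      · exact ht
    have hd := hdY win wout htg
    exact hg _ (Relation.TransGen.head' (Or.inr ⟨sIn win, tOut wout, hd, rfl, rfl⟩) p3)
end

section
/- Let Xin, Xout, S be finite types, let (s_W, W, t_W) be a span from Xout to Xin with induced map W^* : (Xout → ℝ) → (Xin → ℝ), and let d ⊆ Xin × Xout be a relation. Let r : (Xin → ℝ) × (S → ℝ) → (Xout → ℝ) be such that for every σ : S → ℝ and every o ∈ Xout, whenever x, x' : Xin → ℝ agree at every i ∈ Xin with (i, o) ∈ d, then r(x, σ)(o) = r(x', σ)(o). If the graph on vertex type Xin ⊕ Xout, with an edge from s_W(w) ∈ Xout to t_W(w) ∈ Xin for each w ∈ W and an edge from i ∈ Xin to o ∈ Xout for each (i, o) ∈ d, is acyclic, then for every a : Xin → ℝ and σ : S → ℝ the endomorphism (x_in, x_out) ↦ (W^*(x_out) + a, r(x_in, σ)) of (Xin → ℝ) × (Xout → ℝ) has a unique fixed point. -/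
/-- The map `(A → ℝ) → (B → ℝ)` induced by a span `A ←s– R –t→ B`,
namely `t_* ∘ s^*`:  `spanMap s t x b = ∑_{r : t r = b} x (s r)`. -/
noncomputable def spanMap {R A B : Type} [Fintype R] [DecidableEq B]
    (s : R → A) (t : R → B) (x : A → ℝ) : B → ℝ :=
  fun b => ∑ r ∈ Finset.univ.filter (fun r => t r = b), x (s r)

theorem fix_unique_aux {V : Type} (R : V → V → Prop)
    (hwf : WellFounded R) (F : (V → ℝ) → (V → ℝ))
    (hF : ∀ (v : V) (x x' : V → ℝ), (∀ u, R u v → x u = x' u) → F x v = F x' v) :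
    ∃! x : V → ℝ, F x = x := by
  classical
  set G : ∀ v : V, (∀ u, R u v → ℝ) → ℝ :=
    fun v g => F (fun u => if h : R u v then g u h else 0) v with hG
  set x : V → ℝ := hwf.fix G with hx
  have hfix : ∀ v, x v = F x v := by
    intro v
    rw [hx, hwf.fix_eq]
    exact hF v _ x (fun u hu => by simp [hG, hu, hx])
  refine ⟨x, funext (fun v => (hfix v).symm), ?_⟩
  intro y hy
  funext v
  induction v using hwf.induction with
  | _ v ih =>
    rw [← congrFun hy v, hfix v]
    exact hF v y x ih

/-- If the readout `r` respects the dependency relation `d` and the graph of trace wires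
and dependencies is acyclic, then for every input `a` and state `σ` the endomorphism
`(x_in, x_out) ↦ (W^*(x_out) + a, r(x_in, σ))` has a unique fixed point. -/
theorem stmt8 {Xin Xout S W : Type}
    [Fintype Xin] [Fintype Xout] [Fintype S] [Fintype W] [DecidableEq Xin]
    (sW : W → Xout) (tW : W → Xin)
    (d : Xin → Xout → Prop)
    (r : (Xin → ℝ) × (S → ℝ) → (Xout → ℝ))
    (hr : ∀ (σ : S → ℝ) (o : Xout) (x x' : Xin → ℝ),
      (∀ i : Xin, d i o → x i = x' i) → r (x, σ) o = r (x', σ) o)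
    (hacyc : ∀ v : Xin ⊕ Xout, ¬ Relation.TransGen (WireRel sW tW d) v v)
    (a : Xin → ℝ) (σ : S → ℝ) :
    ∃! p : (Xin → ℝ) × (Xout → ℝ),
      (spanMap sW tW p.2 + a, r (p.1, σ)) = p := by
  classical
  set Rel := WireRel sW tW d with hRel
  have hwfT : WellFounded (Relation.TransGen Rel) := by
    have : IsTrans (Xin ⊕ Xout) (Relation.TransGen Rel) := ⟨fun _ _ _ => .trans⟩
    have : IsIrrefl (Xin ⊕ Xout) (Relation.TransGen Rel) := ⟨hacyc⟩
    exact Finite.wellFounded_of_trans_of_irrefl _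
  have hwf : WellFounded Rel := Subrelation.wf (fun h => Relation.TransGen.single h) hwfT
  set F : ((Xin ⊕ Xout) → ℝ) → ((Xin ⊕ Xout) → ℝ) :=
    fun y => Sum.elim (fun i => spanMap sW tW (y ∘ Sum.inr) i + a i)
                      (fun o => r (y ∘ Sum.inl, σ) o) with hFdef
  have hF : ∀ (v : Xin ⊕ Xout) (y y' : (Xin ⊕ Xout) → ℝ),
      (∀ u, Rel u v → y u = y' u) → F y v = F y' v := by
    intro v y y' h
    cases v with
    | inl i =>
      simp only [hFdef, Sum.elim_inl, spanMap]
      congr 1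
      refine Finset.sum_congr rfl (fun w hw => ?_)
      simp only [Finset.mem_filter] at hw
      exact h (Sum.inr (sW w)) (Or.inl ⟨w, rfl, by rw [hw.2]⟩)
    | inr o =>
      simp only [hFdef, Sum.elim_inr]
      exact hr σ o _ _ (fun i hdi => h (Sum.inl i) (Or.inr ⟨i, o, hdi, rfl, rfl⟩))
  obtain ⟨x, hx, hxu⟩ := fix_unique_aux Rel hwf F hF
  refine ⟨(x ∘ Sum.inl, x ∘ Sum.inr), ?_, ?_⟩
  · refine Prod.ext ?_ ?_
    · funext i; exact congrFun hx (Sum.inl i)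
    · funext o; exact congrFun hx (Sum.inr o)
  · intro p hp
    have hy : F (Sum.elim p.1 p.2) = Sum.elim p.1 p.2 := by
      funext v
      cases v with
      | inl i =>
        have := congrFun (congrArg Prod.fst hp) i
        simpa [hFdef] using this
      | inr o =>
        have := congrFun (congrArg Prod.snd hp) o
        simpa [hFdef] using this
    have := hxu _ hy
    refine Prod.ext ?_ ?_
    · funext i; exact congrFun this (Sum.inl i)
    · funext o; exact congrFun this (Sum.inr o)
end

section
/- Let Xin, Xout, Yin, Yout, S be finite types, and let W^* : (Xout → ℝ) → (Xin → ℝ), Win^* : (Yin → ℝ) → (Xin → ℝ), Wg^* : (Yout → ℝ) → (Yin → ℝ), Wout^* : (Xout → ℝ) → (Yout → ℝ) be the maps induced by spans (trace wires of f, input wires of f, trace wires of g, and output wires of f, respectively). Let r : (Xin → ℝ) × (S → ℝ) → (Xout → ℝ), let a : Yin → ℝ, σ : S → ℝ, and suppose x̄in : Xin → ℝ, x̄out : Xout → ℝ, ȳin : Yin → ℝ, ȳout : Yout → ℝ satisfy: x̄in = W^*(x̄out) + Win^*(ȳin), x̄out = r(x̄in, σ), ȳin = Wg^*(ȳout) +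 a, and ȳout = Wout^*(x̄out). Assume further that for every y : Yin → ℝ the endomorphism (x, x') ↦ (W^*(x') + Win^*(y), r(x, σ)) of (Xin → ℝ) × (Xout → ℝ) has a unique fixed point, and define M(y) := Wout^* applied to the Xout-component of that fixed point. Then: (i) (x̄in, x̄out) is the unique fixed point of (x, x') ↦ (W^*(x') + Win^*(ȳin), r(x, σ)); (ii) (ȳin, ȳout) is a fixed point of (y, y') ↦ (Wg^*(y') + a, M(y)); and (iii) (x̄in, x̄out) is a fixed point of (x, x') ↦ (W^*(x') + Win^*(Wg^*(Wout^*(x'))) + Win^*(a), r(x, σ)). -/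

lemma spanMap_add {R A B : Type} [Fintype R] [DecidableEq B]
    (s : R → A) (t : R → B) (x y : A → ℝ) :
    spanMap s t (x + y) = spanMap s t x + spanMap s t y := by
  funext b
  simp [spanMap, Finset.sum_add_distrib]

/-- `W^* = spanMap sW tW`, `Win^* = spanMap sWin tWin`, `Wg^* = spanMap sWg tWg`, and
`Wout^* = spanMap sWout tWout` are the maps induced by the trace wires of `f`, the input
wires of `f`, the trace wires of `g`, and the output wires of `f`.  `phibar y` is the
unique fixed point of `(x, x') ↦ (W^*(x') + Win^*(y), r(x, σ))`, and
`M y := Wout^*((phibar y).2)`.  Given the consistency equations for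
`(x̄in, x̄out, ȳin, ȳout)`: (i) `(x̄in, x̄out)` is the unique fixed point at `ȳin`;
(ii) `(ȳin, ȳout)` is a fixed point of `(y, y') ↦ (Wg^*(y') + a, M y)`;
(iii) `(x̄in, x̄out)` is a fixed point of the composite endomorphism. -/
theorem stmt9 {Xin Xout Yin Yout S W Win Wg Wout : Type}
    [Fintype Xin] [Fintype Xout] [Fintype Yin] [Fintype Yout] [Fintype S]
    [Fintype W] [Fintype Win] [Fintype Wg] [Fintype Wout]
    [DecidableEq Xin] [DecidableEq Yin] [DecidableEq Yout]
    (sW : W → Xout) (tW : W → Xin)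
    (sWin : Win → Yin) (tWin : Win → Xin)
    (sWg : Wg → Yout) (tWg : Wg → Yin)
    (sWout : Wout → Xout) (tWout : Wout → Yout)
    (r : (Xin → ℝ) × (S → ℝ) → (Xout → ℝ))
    (a : Yin → ℝ) (σ : S → ℝ)
    (xbarin : Xin → ℝ) (xbarout : Xout → ℝ)
    (ybarin : Yin → ℝ) (ybarout : Yout → ℝ)
    (h1 : xbarin = spanMap sW tW xbarout + spanMap sWin tWin ybarin)
    (h2 : xbarout = r (xbarin, σ))
    (h3 : ybarin = spanMap sWg tWg ybarout + a)
    (h4 : ybarout = spanMap sWout tWout xbarout)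
    (phibar : (Yin → ℝ) → (Xin → ℝ) × (Xout → ℝ))
    (hfix : ∀ y : Yin → ℝ,
      (spanMap sW tW (phibar y).2 + spanMap sWin tWin y, r ((phibar y).1, σ)) = phibar y)
    (huniq : ∀ (y : Yin → ℝ) (p : (Xin → ℝ) × (Xout → ℝ)),
      (spanMap sW tW p.2 + spanMap sWin tWin y, r (p.1, σ)) = p → p = phibar y) :
    phibar ybarin = (xbarin, xbarout) ∧
    (spanMap sWg tWg ybarout + a,
      spanMap sWout tWout (phibar ybarin).2) = (ybarin, ybarout) ∧
    (spanMap sW tW xbarout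
        + spanMap sWin tWin (spanMap sWg tWg (spanMap sWout tWout xbarout))
        + spanMap sWin tWin a,
      r (xbarin, σ)) = (xbarin, xbarout) := by
  have hp : phibar ybarin = (xbarin, xbarout) := by
    have := huniq ybarin (xbarin, xbarout) (by simp [← h1, ← h2])
    exact this.symm
  refine ⟨hp, ?_, ?_⟩
  · rw [hp]; exact Prod.ext h3.symm h4.symm
  · have : spanMap sWin tWin ybarin
        = spanMap sWin tWin (spanMap sWg tWg (spanMap sWout tWout xbarout))
          + spanMap sWin tWin a := by
      rw [h3, h4, spanMap_add]
    refine Prod.ext ?_ h2.symm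
    show _ = xbarin
    rw [add_assoc, ← this, ← h1]
end

section
/- Let Xin, Xout, Yin, Yout, S be finite types, and let W^* : (Xout → ℝ) → (Xin → ℝ), Win^* : (Yin → ℝ) → (Xin → ℝ), Wg^* : (Yout → ℝ) → (Yin → ℝ), Wout^* : (Xout → ℝ) → (Yout → ℝ) be maps induced by spans. Let r : (Xin → ℝ) × (S → ℝ) → (Xout → ℝ), a : Yin → ℝ, σ : S → ℝ. Assume: (a) for every y : Yin → ℝ the endomorphism (x, x') ↦ (W^*(x') + Win^*(y), r(x, σ)) of (Xin → ℝ) × (Xout → ℝ) has a unique fixed point φ̄^f(y), and define M(y) := Wout^*(snd(φ̄^f(y))); (b) the endomorphism (y, y') ↦ (Wg^*(y') + a, M(y)) of (Yin → ℝ) × (Yout → ℝ) has a unique fixed point (ȳin, ȳout); (c) the endomorphism (x, x') ↦ (W^*(x') + Win^*(Wg^*(Wout^*(x'))) + Win^*(a), r(x, σ)) has a unique fixed point (x̄in, x̄out). Then ȳout = Wout^*(x̄out) and fst(φ̄^f(ȳin)) = x̄in. -/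
/-- With `W^*, Win^*, Wg^*, Wout^*` induced by spans: (a) `phibar y` is the unique fixed
point of `(x, x') ↦ (W^*(x') + Win^*(y), r(x, σ))` and `M y := Wout^*((phibar y).2)`;
(b) `(ȳin, ȳout)` is the unique fixed point of `(y, y') ↦ (Wg^*(y') + a, M y)`;
(c) `(x̄in, x̄out)` is the unique fixed point of
`(x, x') ↦ (W^*(x') + Win^*(Wg^*(Wout^*(x'))) + Win^*(a), r(x, σ))`.
Then `ȳout = Wout^*(x̄out)` and `(phibar ȳin).1 = x̄in`. -/
theorem stmt10 {Xin Xout Yin Yout S W Win Wg Wout : Type}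
    [Fintype Xin] [Fintype Xout] [Fintype Yin] [Fintype Yout] [Fintype S]
    [Fintype W] [Fintype Win] [Fintype Wg] [Fintype Wout]
    [DecidableEq Xin] [DecidableEq Yin] [DecidableEq Yout]
    (sW : W → Xout) (tW : W → Xin)
    (sWin : Win → Yin) (tWin : Win → Xin)
    (sWg : Wg → Yout) (tWg : Wg → Yin)
    (sWout : Wout → Xout) (tWout : Wout → Yout)
    (r : (Xin → ℝ) × (S → ℝ) → (Xout → ℝ))
    (a : Yin → ℝ) (σ : S → ℝ)
    (phibar : (Yin → ℝ) → (Xin → ℝ) × (Xout → ℝ))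
    (hfixf : ∀ y : Yin → ℝ,
      (spanMap sW tW (phibar y).2 + spanMap sWin tWin y, r ((phibar y).1, σ)) = phibar y)
    (huniqf : ∀ (y : Yin → ℝ) (p : (Xin → ℝ) × (Xout → ℝ)),
      (spanMap sW tW p.2 + spanMap sWin tWin y, r (p.1, σ)) = p → p = phibar y)
    (ybarin : Yin → ℝ) (ybarout : Yout → ℝ)
    (hfixg : (spanMap sWg tWg ybarout + a,
      spanMap sWout tWout (phibar ybarin).2) = (ybarin, ybarout))
    (huniqg : ∀ q : (Yin → ℝ) × (Yout → ℝ),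
      (spanMap sWg tWg q.2 + a, spanMap sWout tWout (phibar q.1).2) = q →
      q = (ybarin, ybarout))
    (xbarin : Xin → ℝ) (xbarout : Xout → ℝ)
    (hfixgf : (spanMap sW tW xbarout
        + spanMap sWin tWin (spanMap sWg tWg (spanMap sWout tWout xbarout))
        + spanMap sWin tWin a,
      r (xbarin, σ)) = (xbarin, xbarout))
    (huniqgf : ∀ p : (Xin → ℝ) × (Xout → ℝ),
      (spanMap sW tW p.2
          + spanMap sWin tWin (spanMap sWg tWg (spanMap sWout tWout p.2))
          + spanMap sWin tWin a,
        r (p.1, σ)) = p → p = (xbarin, xbarout)) :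
    ybarout = spanMap sWout tWout xbarout ∧ (phibar ybarin).1 = xbarin := by
  have hg1 : spanMap sWg tWg ybarout + a = ybarin := congrArg Prod.fst hfixg
  have hg2 : spanMap sWout tWout (phibar ybarin).2 = ybarout := congrArg Prod.snd hfixg
  have hf := hfixf ybarin
  have hf1 : spanMap sW tW (phibar ybarin).2 + spanMap sWin tWin ybarin
      = (phibar ybarin).1 := congrArg Prod.fst hf
  have hf2 : r ((phibar ybarin).1, σ) = (phibar ybarin).2 := congrArg Prod.snd hf
  have key : phibar ybarin = (xbarin, xbarout) := by
    apply huniqgf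
    rw [hg2, add_assoc, ← spanMap_add, hg1, hf1, hf2]
  constructor
  · rw [← hg2, key]
  · rw [key]
end

section
/- Let Xin, Xout, Yin, Yout, S be finite types; let (s_W, W, t_W) be a span from Xout to Xin with induced W^* : (Xout → ℝ) → (Xin → ℝ); let Win be a finite type with maps s : Win → Yin, t : Win → Xin inducing Win^* : (Yin → ℝ) → (Xin → ℝ); let Wout be a finite type with maps s : Wout → Xout, t : Wout → Yout inducing Wout^* : (Xout → ℝ) → (Yout → ℝ); and let d_X ⊆ Xin × Xout, d_Y ⊆ Yin × Yout be relations. Let r : (Xin → ℝ) × (S → ℝ) → (Xout → ℝ) be such that for every σ and o ∈ Xout, r(x, σ)(o) depends only on the values of x at inputs i with (i, o) ∈ d_X. Let G_f be the graph on Xin ⊕ Xout with an edge from s_W(w) to t_W(w) for each w ∈ W and an edge from i to o for each (i, o) ∈ d_X, and assume G_f is acyclic, so that for each a : Xin → ℝ and σ the endomorphism (x, x') ↦ (W^*(x') + a, r(x, σ)) has a unique fixed point φ̄(a, σ). Assume moreover that for every win ∈ Win and wout ∈ Wout, if there is a path in G_f from t(win) to s(wout), then (s(win), t(wout)) ∈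 d_Y. Then for every σ the function a ↦ Wout^*(snd(φ̄(Win^*(a), σ))) : (Yin → ℝ) → (Yout → ℝ) respects d_Y: for every o' ∈ Yout, its value at o' depends only on the values of a at those i' ∈ Yin with (i', o') ∈ d_Y. -/
/-- If `r` respects `d_X`, the graph `G_f` of trace wires and `d_X` is acyclic (so that
`(x, x') ↦ (W^*(x') + a, r(x, σ))` has a unique fixed point `phibar a σ`), and every
path of `G_f` from the target of an input wire to the source of an output wire is
recorded in `d_Y`, then the composite readout
`a ↦ Wout^*((phibar (Win^* a) σ).2)` respects `d_Y`. -/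
theorem stmt11 {Xin Xout Yin Yout S W Win Wout : Type}
    [Fintype Xin] [Fintype Xout] [Fintype Yin] [Fintype Yout] [Fintype S]
    [Fintype W] [Fintype Win] [Fintype Wout]
    [DecidableEq Xin] [DecidableEq Yout]
    (sW : W → Xout) (tW : W → Xin)
    (sWin : Win → Yin) (tWin : Win → Xin)
    (sWout : Wout → Xout) (tWout : Wout → Yout)
    (dX : Xin → Xout → Prop) (dY : Yin → Yout → Prop)
    (r : (Xin → ℝ) × (S → ℝ) → (Xout → ℝ))
    (hr : ∀ (σ : S → ℝ) (o : Xout) (x x' : Xin → ℝ),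
      (∀ i : Xin, dX i o → x i = x' i) → r (x, σ) o = r (x', σ) o)
    (hacyc : ∀ v : Xin ⊕ Xout, ¬ Relation.TransGen (WireRel sW tW dX) v v)
    (phibar : (Xin → ℝ) → (S → ℝ) → (Xin → ℝ) × (Xout → ℝ))
    (hfix : ∀ (a : Xin → ℝ) (σ : S → ℝ),
      (spanMap sW tW (phibar a σ).2 + a, r ((phibar a σ).1, σ)) = phibar a σ)
    (huniq : ∀ (a : Xin → ℝ) (σ : S → ℝ) (p : (Xin → ℝ) × (Xout → ℝ)),
      (spanMap sW tW p.2 + a, r (p.1, σ)) = p → p = phibar a σ)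
    (hwires : ∀ (win : Win) (wout : Wout),
      Relation.TransGen (WireRel sW tW dX) (Sum.inl (tWin win)) (Sum.inr (sWout wout)) →
      dY (sWin win) (tWout wout)) :
    ∀ (σ : S → ℝ) (o' : Yout) (a a' : Yin → ℝ),
      (∀ i' : Yin, dY i' o' → a i' = a' i') →
      spanMap sWout tWout (phibar (spanMap sWin tWin a) σ).2 o' =
        spanMap sWout tWout (phibar (spanMap sWin tWin a') σ).2 o' := by
  classical
  intro σ o' a a' ha
  set A := spanMap sWin tWin a with hA
  set A' := spanMap sWin tWin a' with hA'
  set φ := phibar A σ with hφ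
  set φ' := phibar A' σ with hφ'
  have h1 : φ.1 = spanMap sW tW φ.2 + A := (congrArg Prod.fst (hfix A σ)).symm
  have h2 : φ.2 = r (φ.1, σ) := (congrArg Prod.snd (hfix A σ)).symm
  have h1' : φ'.1 = spanMap sW tW φ'.2 + A' := (congrArg Prod.fst (hfix A' σ)).symm
  have h2' : φ'.2 = r (φ'.1, σ) := (congrArg Prod.snd (hfix A' σ)).symm
  haveI : IsTrans (Xin ⊕ Xout) (Relation.TransGen (WireRel sW tW dX)) :=
    ⟨fun _ _ _ h h' => h.trans h'⟩
  haveI : IsIrrefl (Xin ⊕ Xout) (Relation.TransGen (WireRel sW tW dX)) := ⟨hacyc⟩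
  have hwf : WellFounded (Relation.TransGen (WireRel sW tW dX)) :=
    Finite.wellFounded_of_trans_of_irrefl _
  simp only [spanMap]
  refine Finset.sum_congr rfl ?_
  intro wout hw
  have hto : tWout wout = o' := (Finset.mem_filter.mp hw).2
  have key : ∀ v : Xin ⊕ Xout,
      Relation.ReflTransGen (WireRel sW tW dX) v (Sum.inr (sWout wout)) →
      Sum.elim φ.1 φ.2 v = Sum.elim φ'.1 φ'.2 v := by
    intro v
    induction v using hwf.induction with
    | _ v IH =>
      intro hpath
      match v with
      | Sum.inl i =>
        simp only [Sum.elim_inl]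
        rw [congrFun h1 i, congrFun h1' i]
        simp only [Pi.add_apply]
        have hspan : spanMap sW tW φ.2 i = spanMap sW tW φ'.2 i := by
          unfold spanMap
          refine Finset.sum_congr rfl ?_
          intro w hwmem
          have htw : tW w = i := (Finset.mem_filter.mp hwmem).2
          have hedge : WireRel sW tW dX (Sum.inr (sW w)) (Sum.inl i) :=
            Or.inl ⟨w, rfl, by rw [htw]⟩
          have := IH (Sum.inr (sW w)) (Relation.TransGen.single hedge)
            (Relation.ReflTransGen.head hedge hpath)
          simpa using this
        have hain : A i = A' i := by
          rw [hA, hA']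
          unfold spanMap
          refine Finset.sum_congr rfl ?_
          intro win hwin
          have htwin : tWin win = i := (Finset.mem_filter.mp hwin).2
          refine ha _ ?_
          have htrans : Relation.TransGen (WireRel sW tW dX)
              (Sum.inl (tWin win)) (Sum.inr (sWout wout)) := by
            rw [htwin]
            rcases (Relation.reflTransGen_iff_eq_or_transGen.mp hpath) with h | h
            · exact absurd h (by simp)
            · exact h
          have := hwires win wout htrans
          rwa [hto] at this
        rw [hspan, hain]
      | Sum.inr o =>
        simp only [Sum.elim_inr]
        rw [congrFun h2 o, congrFun h2' o]
        refine hr σ o _ _ ?_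
        intro i hdi
        have hedge : WireRel sW tW dX (Sum.inl i) (Sum.inr o) :=
          Or.inr ⟨i, o, hdi, rfl, rfl⟩
        have := IH (Sum.inl i) (Relation.TransGen.single hedge)
          (Relation.ReflTransGen.head hedge hpath)
        simpa using this
  have := key (Sum.inr (sWout wout)) Relation.ReflTransGen.refl
  simpa using this
end

section
/- Let Xin, Xout, S be finite types; let (s_W, W, t_W) be a span from Xout to Xin with induced W^* : (Xout → ℝ) → (Xin → ℝ); let d_X ⊆ Xin × Xout; and let r : (Xin → ℝ) × (S → ℝ) → (Xout → ℝ) be such that for every σ and o ∈ Xout, r(x, σ)(o) depends only on the values of x at inputs i with (i, o) ∈ d_X. Let G_f be the graph on Xin ⊕ Xout with an edge from s_W(w) to t_W(w) for each w ∈ W and an edge from i to o for each (i, o) ∈ d_X, and assume G_f is acyclic, so that for each a : Xin → ℝ and σ the endomorphism (x, x') ↦ (W^*(x') + a, r(x, σ)) has a unique fixed point φ̄(a, σ). Then for every σ and every vertex p of Xin ⊕ Xout, the p-component of φ̄(a, σ) depends only on the values of a at those i ∈ Xin such that either i = p or there is a path in G_f from i to p. -/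
/-- If `r` respects `d_X` and the graph `G_f` of trace wires and `d_X` is acyclic, so
that `(x, x') ↦ (W^*(x') + a, r(x, σ))` has a unique fixed point `phibar a σ`, then the
component of `phibar a σ` at a vertex `p : Xin ⊕ Xout` depends only on the values of `a`
at those `i : Xin` with `i = p` or with a path in `G_f` from `i` to `p`. -/
theorem stmt12 {Xin Xout S W : Type}
    [Fintype Xin] [Fintype Xout] [Fintype S] [Fintype W] [DecidableEq Xin]
    (sW : W → Xout) (tW : W → Xin)
    (dX : Xin → Xout → Prop)
    (r : (Xin → ℝ) × (S → ℝ) → (Xout → ℝ))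
    (hr : ∀ (σ : S → ℝ) (o : Xout) (x x' : Xin → ℝ),
      (∀ i : Xin, dX i o → x i = x' i) → r (x, σ) o = r (x', σ) o)
    (hacyc : ∀ v : Xin ⊕ Xout, ¬ Relation.TransGen (WireRel sW tW dX) v v)
    (phibar : (Xin → ℝ) → (S → ℝ) → (Xin → ℝ) × (Xout → ℝ))
    (hfix : ∀ (a : Xin → ℝ) (σ : S → ℝ),
      (spanMap sW tW (phibar a σ).2 + a, r ((phibar a σ).1, σ)) = phibar a σ)
    (huniq : ∀ (a : Xin → ℝ) (σ : S → ℝ) (p : (Xin → ℝ) × (Xout → ℝ)),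
      (spanMap sW tW p.2 + a, r (p.1, σ)) = p → p = phibar a σ) :
    ∀ (σ : S → ℝ) (p : Xin ⊕ Xout) (a a' : Xin → ℝ),
      (∀ i : Xin,
        (Sum.inl i = p ∨ Relation.TransGen (WireRel sW tW dX) (Sum.inl i) p) →
        a i = a' i) →
      Sum.elim (phibar a σ).1 (phibar a σ).2 p =
        Sum.elim (phibar a' σ).1 (phibar a' σ).2 p := by
  intro σ
  have hwf : WellFounded (WireRel sW tW dX) := by
    have hir : IsIrrefl (Xin ⊕ Xout) (Relation.TransGen (WireRel sW tW dX)) := ⟨hacyc⟩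
    have htw : WellFounded (Relation.TransGen (WireRel sW tW dX)) :=
      Finite.wellFounded_of_trans_of_irrefl _
    exact Subrelation.wf (fun h => Relation.TransGen.single h) htw
  intro p
  refine hwf.induction
    (C := fun p => ∀ a a' : Xin → ℝ,
      (∀ i : Xin,
        (Sum.inl i = p ∨ Relation.TransGen (WireRel sW tW dX) (Sum.inl i) p) →
        a i = a' i) →
      Sum.elim (phibar a σ).1 (phibar a σ).2 p =
        Sum.elim (phibar a' σ).1 (phibar a' σ).2 p) p ?_
  clear p
  rintro p IH a a' hyp
  cases p with
  | inl i =>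
    simp only [Sum.elim_inl]
    rw [← congrArg Prod.fst (hfix a σ), ← congrArg Prod.fst (hfix a' σ)]
    simp only [Pi.add_apply, spanMap]
    congr 1
    · refine Finset.sum_congr rfl (fun w hw => ?_)
      have hwi : tW w = i := by simpa using hw
      have edge : WireRel sW tW dX (Sum.inr (sW w)) (Sum.inl i) :=
        Or.inl ⟨w, rfl, by rw [hwi]⟩
      have := IH (Sum.inr (sW w)) edge a a' (fun j hj => hyp j (hj.elim
        (fun h => by exact absurd h (by simp))
        (fun htg => Or.inr (htg.tail edge))))
      simpa using this
    · exact hyp i (Or.inl rfl)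
  | inr o =>
    simp only [Sum.elim_inr]
    rw [← congrArg Prod.snd (hfix a σ), ← congrArg Prod.snd (hfix a' σ)]
    refine hr σ o _ _ (fun i hdi => ?_)
    have edge : WireRel sW tW dX (Sum.inl i) (Sum.inr o) := Or.inr ⟨i, o, hdi, rfl, rfl⟩
    have := IH (Sum.inl i) edge a a' (fun j hj => hyp j (hj.elim
      (fun h => Or.inr (by cases h; exact Relation.TransGen.single edge))
      (fun htg => Or.inr (htg.tail edge))))
    simpa using this
end

section
/- Let Stock, SumVar, Var, Xin be finite types; let (s_L, L, t_L) be a span from Stock to SumVar with induced map L^* : (Stock → ℝ) → (SumVar → ℝ) (the sum links); and let VL be a finite type with maps src, tgt : VL → Var (the variable links) such that the graph (Var, VL) is acyclic. Let φ : (Stock → ℝ) × (SumVar → ℝ) × (Var → ℝ) × (Xin → ℝ) → (Var → ℝ) be such that for all fixed s : Stock → ℝ, u : SumVar → ℝ, a : Xin → ℝ, and every v ∈ Var, the value φ(s, u, x, a)(v) depends only on the values of x at variables w with an edge in VL from w to v. Then for every s : Stock → ℝ and a : Xin → ℝ the endomorphism x ↦ φ(s, L^*(s), x, a) of (Var → ℝ)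 has a unique fixed point. -/
/-- For an open stock-flow diagram whose auxiliary function `φ` at each variable `v`
depends only on the variables linked to `v` by variable links, and whose graph of
variable links is acyclic, the endomorphism `x ↦ φ(s, L^*(s), x, a)` of `Var → ℝ` has a
unique fixed point for each supply of stocks `s` and input `a`.  Here `L^*` is the map
induced by the sum links. -/
theorem stmt13 {Stock SumVar Var Xin L VL : Type}
    [Fintype Stock] [Fintype SumVar] [Fintype Var] [Fintype Xin]
    [Fintype L] [Fintype VL] [DecidableEq SumVar]
    (sL : L → Stock) (tL : L → SumVar)
    (src tgt : VL → Var)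
    (hacyc : ∀ v : Var, ¬ Relation.TransGen (EdgeRel src tgt) v v)
    (φ : (Stock → ℝ) × (SumVar → ℝ) × (Var → ℝ) × (Xin → ℝ) → (Var → ℝ))
    (hφ : ∀ (s : Stock → ℝ) (u : SumVar → ℝ) (a : Xin → ℝ) (v : Var)
        (x x' : Var → ℝ),
      (∀ e : VL, tgt e = v → x (src e) = x' (src e)) →
      φ (s, u, x, a) v = φ (s, u, x', a) v) :
    ∀ (s : Stock → ℝ) (a : Xin → ℝ),
      ∃! x : Var → ℝ, φ (s, spanMap sL tL s, x, a) = x := by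
  classical
  intro s a
  set r : Var → Var → Prop := EdgeRel src tgt with hr
  have htrans : IsTrans Var (Relation.TransGen r) := ⟨fun _ _ _ => Relation.TransGen.trans⟩
  have hirrefl : IsIrrefl Var (Relation.TransGen r) := ⟨hacyc⟩
  have wfT : WellFounded (Relation.TransGen r) :=
    Finite.wellFounded_of_trans_of_irrefl _
  have wf : WellFounded r := Subrelation.wf (fun h => Relation.TransGen.single h) wfT
  set u := spanMap sL tL s with hu
  set x : Var → ℝ := WellFounded.fix wf
    (fun v ih => φ (s, u, fun w => if h : r w v then ih w h else 0, a) v) with hx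
  have hxeq : ∀ v, x v = φ (s, u, fun w => if h : r w v then x w else 0, a) v := by
    intro v
    rw [hx, WellFounded.fix_eq]
  have hfix : φ (s, u, x, a) = x := by
    funext v
    rw [hxeq v]
    apply hφ
    intro e he
    have : r (src e) v := ⟨e, rfl, he⟩
    simp [this]
  refine ⟨x, hfix, ?_⟩
  intro y hy
  funext v
  induction v using WellFounded.induction wf with
  | _ v ih =>
    calc y v = φ (s, u, y, a) v := by rw [hy]
    _ = φ (s, u, x, a) v := by
        apply hφ
        intro e he
        exact ih (src e) ⟨e, rfl, he⟩
    _ = x v := by rw [hfix]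
end
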